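/- Let g : ℝ^m → ℝ ∪ {∞} be a proper convex lower semicontinuous function and let A : ℝ^n → ℝ^m be a linear map satisfying Aᵀ A = α·Id for some constant α > 0. Define approx_f : ℝ^n → ℝ^n by approx_f(x) = α⁻¹ Aᵀ prox_{αg}(Ax). Then approx_f is the proximal operator of the function φ : ℝ^n → ℝ ∪ {∞} defined by φ(x) = α⁻¹ · inf over y ∈ ℝ^m of [ α g(y) + (1/2)‖Ax − y‖² + ι_{N(Aᵀ)}(Ax − y) ], where N(Aᵀ) denotes the null space of Aᵀ; that is, approx_f = prox_φ. -/

import Mathlib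

noncomputable section

open scoped Classical

/-- `p` is a proximal point of the extended-real-valued function `h` at `x`,
i.e. `p` minimizes `u ↦ h u + (1/2)‖u − x‖²`. -/
def IsProxPt {E : Type*} [NormedAddCommGroup E] [InnerProductSpace ℝ E]
    (h : E → EReal) (x p : E) : Prop :=
  ∀ u : E,
    h p + (((1 : ℝ) / 2 * ‖p - x‖ ^ 2 : ℝ) : EReal) ≤
      h u + (((1 : ℝ) / 2 * ‖u - x‖ ^ 2 : ℝ) : EReal)

/-- `g` is proper, convex and lower semicontinuous (values in `ℝ ∪ {∞}`). -/
def ProperConvexLSC {E : Type*} [NormedAddCommGroup E] [InnerProductSpace ℝ E]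
    (g : E → EReal) : Prop :=
  (∃ x, g x ≠ ⊤) ∧ (∀ x, g x ≠ ⊥) ∧ LowerSemicontinuous g ∧
    ∀ x y : E, ∀ a b : ℝ, 0 ≤ a → 0 ≤ b → a + b = 1 →
      g (a • x + b • y) ≤ (a : EReal) * g x + (b : EReal) * g y

/-- The `(0, ∞)`-valued indicator function of a set. -/
def eindicator {E : Type*} (C : Set E) (x : E) : EReal :=
  if x ∈ C then (0 : EReal) else ⊤

/-!
Since `A†A = α • id`, the constraint `A†(A u - y) = 0` says `A† y = α • u`, and then
`‖y - A x‖² = ‖A u - y‖² + α ‖u - x‖²` because `y - A u ⊥ range A`. So `α (φ u + ½‖u - x‖²)` is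
the infimum of `H y = α g y + ½‖y - A x‖²` over the fiber `{y | A† y = α • u}`. Convexity of `g`
gives quadratic growth of `H` around its minimizer `p = prox_{αg}(A x)`:
`H y ≥ H p + ¼‖y - p‖²`. As `‖A† v‖² ≤ α ‖v‖²`, this becomes quadratic growth of the proximal
objective of `φ` around `α⁻¹ • A† p`, where that objective takes the value `α⁻¹ H p`.
-/

open scoped InnerProduct RealInnerProductSpace

namespace EReal

lemma coe_le_add_coe_of_le_add_coe {X : EReal} {a b a' b' : ℝ} (h : (a : EReal) ≤ X + b)
    (hab : a' - b' ≤ a - b) : (a' : EReal) ≤ X + b' := by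
  induction X using EReal.rec with
  | bot => simp at h
  | coe c =>
    norm_cast at h ⊢
    linarith
  | top => simp

end EReal

def ERealConvex {E : Type*} [AddCommGroup E] [Module ℝ E] (h : E → EReal) : Prop :=
  ∀ x y : E, ∀ a b : ℝ, 0 ≤ a → 0 ≤ b → a + b = 1 →
    h (a • x + b • y) ≤ (a : EReal) * h x + (b : EReal) * h y

lemma ERealConvex.const_mul {E : Type*} [AddCommGroup E] [Module ℝ E] {h : E → EReal}
    (hh : ERealConvex h) {α : ℝ} (hα : 0 ≤ α) : ERealConvex fun z => (α : EReal) * h z := by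
  intro x y a b ha hb hab
  have hα' : (0 : EReal) ≤ α := by exact_mod_cast hα
  calc (α : EReal) * h (a • x + b • y) ≤ α * (a * h x + b * h y) :=
        mul_le_mul_of_nonneg_left (hh x y a b ha hb hab) hα'
    _ = a * (α * h x) + b * (α * h y) := by
        rw [EReal.left_distrib_of_nonneg_of_ne_top hα' (EReal.coe_ne_top α), mul_left_comm,
          mul_left_comm (α : EReal)]

section Prox

variable {F : Type*} [NormedAddCommGroup F] [InnerProductSpace ℝ F]

lemma norm_midpoint_sub_sq (y z x : F) :
    ‖(1 / 2 : ℝ) • y + (1 / 2 : ℝ) • z - x‖ ^ 2 =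
      1 / 2 * ‖y - x‖ ^ 2 + 1 / 2 * ‖z - x‖ ^ 2 - 1 / 4 * ‖y - z‖ ^ 2 := by
  have hpar := parallelogram_law_with_norm ℝ (y - x) (z - x)
  rw [show (1 / 2 : ℝ) • y + (1 / 2 : ℝ) • z - x = (1 / 2 : ℝ) • (y - x + (z - x)) by module,
    norm_smul, sub_sub_sub_cancel_right] at *
  rw [Real.norm_eq_abs, abs_of_pos (by norm_num : (0 : ℝ) < 1 / 2)]
  linear_combination hpar / 4

variable {h : F → EReal} {x p : F}

lemma IsProxPt.ne_bot (hp : IsProxPt h x p) (hpb : h p ≠ ⊥) (u : F) : h u ≠ ⊥ := by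
  intro hu
  have := hp u
  rw [hu, EReal.bot_add, le_bot_iff, EReal.add_eq_bot_iff] at this
  exact this.elim hpb (EReal.coe_ne_bot _)

lemma IsProxPt.ne_top (hp : IsProxPt h x p) {u : F} (hu : h u ≠ ⊤) : h p ≠ ⊤ := by
  intro hpt
  have := hp u
  rw [hpt, EReal.top_add_of_ne_bot (EReal.coe_ne_bot _), top_le_iff] at this
  exact EReal.add_ne_top hu (EReal.coe_ne_top _) this

lemma IsProxPt.add_quarter_norm_sq_le (hconv : ERealConvex h) (hp : IsProxPt h x p) {a : ℝ}
    (hpa : h p = a) (y : F) :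
    ((a + 1 / 2 * ‖p - x‖ ^ 2 + 1 / 4 * ‖y - p‖ ^ 2 : ℝ) : EReal) ≤
      h y + ((1 / 2 * ‖y - x‖ ^ 2 : ℝ) : EReal) := by
  have hbot := hp.ne_bot (hpa ▸ EReal.coe_ne_bot a)
  by_cases htop : h y = ⊤
  · rw [htop, EReal.top_add_of_ne_bot (EReal.coe_ne_bot _)]
    exact le_top
  lift h y to ℝ using ⟨htop, hbot y⟩ with b hb
  have hmid := hconv p y (1 / 2) (1 / 2) (by norm_num) (by norm_num) (by norm_num)
  rw [hpa, ← hb, ← EReal.coe_mul, ← EReal.coe_mul, ← EReal.coe_add] at hmid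
  lift h ((1 / 2 : ℝ) • p + (1 / 2 : ℝ) • y) to ℝ
    using ⟨ne_top_of_le_ne_top (EReal.coe_ne_top _) hmid, hbot _⟩ with c hc
  have hpmid := hp ((1 / 2 : ℝ) • p + (1 / 2 : ℝ) • y)
  rw [hpa, ← hc, norm_midpoint_sub_sq, norm_sub_rev p y] at hpmid
  norm_cast at hmid hpmid ⊢
  linarith

end Prox

section Adjoint

variable {E F : Type*} [NormedAddCommGroup E] [InnerProductSpace ℝ E] [CompleteSpace E]
  [NormedAddCommGroup F] [InnerProductSpace ℝ F] [CompleteSpace F]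
  {A : E →L[ℝ] F} {α : ℝ}

lemma norm_apply_sq_of_adjoint_apply (hA : ∀ u, (A†) (A u) = α • u) (u : E) :
    ‖A u‖ ^ 2 = α * ‖u‖ ^ 2 := by
  rw [← real_inner_self_eq_norm_sq, ← ContinuousLinearMap.adjoint_inner_right, hA,
    real_inner_smul_right, real_inner_self_eq_norm_sq]

lemma norm_sub_apply_sq_of_adjoint_eq_zero (hA : ∀ u, (A†) (A u) = α • u) {u : E} {y : F}
    (hy : (A†) (A u - y) = 0) (x : E) :
    ‖y - A x‖ ^ 2 = ‖A u - y‖ ^ 2 + α * ‖u - x‖ ^ 2 := by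
  have horth : ⟪y - A u, A (u - x)⟫ = 0 := by
    rw [← ContinuousLinearMap.adjoint_inner_left, ← neg_sub, map_neg, hy, neg_zero,
      inner_zero_left]
  rw [← sub_add_sub_cancel y (A u) (A x), ← map_sub, norm_add_sq_real, horth,
    norm_apply_sq_of_adjoint_apply hA, norm_sub_rev y]
  ring

lemma adjoint_apply_inv_smul_adjoint_sub_self (hA : ∀ u, (A†) (A u) = α • u) (hα : α ≠ 0)
    (v : F) : (A†) (A (α⁻¹ • (A†) v) - v) = 0 := by
  rw [map_sub, hA, smul_smul, mul_inv_cancel₀ hα, one_smul, sub_self]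

lemma norm_adjoint_apply_sq_le (hA : ∀ u, (A†) (A u) = α • u) (hα : 0 < α) (v : F) :
    ‖(A†) v‖ ^ 2 ≤ α * ‖v‖ ^ 2 := by
  have hpyth := norm_sub_apply_sq_of_adjoint_eq_zero hA
    (adjoint_apply_inv_smul_adjoint_sub_self hA hα.ne' v) 0
  rw [map_zero, sub_zero, sub_zero, norm_smul, Real.norm_eq_abs, abs_inv, abs_of_pos hα] at hpyth
  rw [hpyth]
  field_simp
  nlinarith [sq_nonneg ‖A (α⁻¹ • (A†) v) - v‖]

end Adjoint

lemma forall_le_iff_eq_of_quadratic_growth {E : Type*} [NormedAddCommGroup E] {Φ : E → EReal}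
    {q₀ : E} {c κ : ℝ} (hκ : 0 < κ) (h₀ : Φ q₀ ≤ c)
    (hgrowth : ∀ u, ((c + κ * ‖u - q₀‖ ^ 2 : ℝ) : EReal) ≤ Φ u) (q : E) :
    (∀ u, Φ q ≤ Φ u) ↔ q = q₀ := by
  constructor
  · intro hq
    have hle : ((c + κ * ‖q - q₀‖ ^ 2 : ℝ) : EReal) ≤ c := (hgrowth q).trans ((hq q₀).trans h₀)
    norm_cast at hle
    have hsq : ‖q - q₀‖ ^ 2 = 0 := by nlinarith [sq_nonneg ‖q - q₀‖]
    simpa [sub_eq_zero] using hsq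
  · rintro rfl u
    refine h₀.trans (le_trans ?_ (hgrowth u))
    exact_mod_cast le_add_of_nonneg_right (by positivity)

section Envelope

variable {E F : Type*} [NormedAddCommGroup E] [InnerProductSpace ℝ E] [CompleteSpace E]
  [NormedAddCommGroup F] [InnerProductSpace ℝ F] [CompleteSpace F]
  {A : E →L[ℝ] F} {α : ℝ} {h : F → EReal} {x : E} {p : F}

variable (A) in
/-- `φ = α⁻¹ • fiberEnvelope A (α • g)`: the infimum runs over `y ∈ A u + ker A†`. -/
def fiberEnvelope (h : F → EReal) (u : E) : EReal :=
  ⨅ y, h y + ((1 / 2 * ‖A u - y‖ ^ 2 : ℝ) : EReal) + eindicator {v | (A†) v = 0} (A u - y)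

lemma le_fiberEnvelope (hA : ∀ u, (A†) (A u) = α • u) (hα : 0 < α) {c : ℝ}
    (hH : ∀ y, ((c + 1 / 4 * ‖y - p‖ ^ 2 : ℝ) : EReal) ≤
      h y + ((1 / 2 * ‖y - A x‖ ^ 2 : ℝ) : EReal)) (u : E) :
    ((c + α / 4 * ‖u - α⁻¹ • (A†) p‖ ^ 2 - α / 2 * ‖u - x‖ ^ 2 : ℝ) : EReal) ≤
      fiberEnvelope A h u := by
  refine le_iInf fun y => ?_
  by_cases hy : (A†) (A u - y) = 0
  · have hind : eindicator {v | (A†) v = 0} (A u - y) = 0 := if_pos hy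
    rw [hind, add_zero]
    have hAy : (A†) y = α • u := by
      rw [map_sub, hA, sub_eq_zero] at hy
      exact hy.symm
    have hproj : α * ‖u - α⁻¹ • (A†) p‖ ^ 2 ≤ ‖y - p‖ ^ 2 := by
      have hle := norm_adjoint_apply_sq_le hA hα (y - p)
      rw [map_sub, hAy, show α • u - (A†) p = α • (u - α⁻¹ • (A†) p) by
        rw [smul_sub, smul_smul, mul_inv_cancel₀ hα.ne', one_smul], norm_smul, Real.norm_eq_abs,
        abs_of_pos hα] at hle
      exact le_of_mul_le_mul_left (by nlinarith) hα
    have hyH := hH y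
    rw [norm_sub_apply_sq_of_adjoint_eq_zero hA hy] at hyH
    exact EReal.coe_le_add_coe_of_le_add_coe hyH (by linarith)
  · have hind : eindicator {v | (A†) v = 0} (A u - y) = ⊤ := if_neg hy
    have hy_bot : h y ≠ ⊥ := fun hb => by
      have hyH := hH y
      rw [hb, EReal.bot_add, le_bot_iff] at hyH
      exact EReal.coe_ne_bot _ hyH
    rw [hind, EReal.add_top_of_ne_bot (EReal.add_ne_bot_iff.2 ⟨hy_bot, EReal.coe_ne_bot _⟩)]
    exact le_top

lemma le_inv_mul_fiberEnvelope_add (hA : ∀ u, (A†) (A u) = α • u) (hα : 0 < α) {c : ℝ}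
    (hH : ∀ y, ((c + 1 / 4 * ‖y - p‖ ^ 2 : ℝ) : EReal) ≤
      h y + ((1 / 2 * ‖y - A x‖ ^ 2 : ℝ) : EReal)) (u : E) :
    ((α⁻¹ * c + 1 / 4 * ‖u - α⁻¹ • (A†) p‖ ^ 2 : ℝ) : EReal) ≤
      ((α⁻¹ : ℝ) : EReal) * fiberEnvelope A h u + ((1 / 2 * ‖u - x‖ ^ 2 : ℝ) : EReal) := by
  have hle := mul_le_mul_of_nonneg_left (le_fiberEnvelope hA hα hH u)
    (by exact_mod_cast (inv_pos.2 hα).le : (0 : EReal) ≤ ((α⁻¹ : ℝ) : EReal))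
  rw [← EReal.coe_mul, ← add_zero (((α⁻¹ : ℝ) : EReal) * fiberEnvelope A h u),
    ← EReal.coe_zero] at hle
  refine EReal.coe_le_add_coe_of_le_add_coe hle (le_of_eq ?_)
  field_simp
  ring

lemma fiberEnvelope_le (hA : ∀ u, (A†) (A u) = α • u) (hα : α ≠ 0) {a : ℝ} (hpa : h p = a) :
    fiberEnvelope A h (α⁻¹ • (A†) p) ≤ ((a + 1 / 2 * ‖A (α⁻¹ • (A†) p) - p‖ ^ 2 : ℝ) : EReal) := by
  have hind : eindicator {v | (A†) v = 0} (A (α⁻¹ • (A†) p) - p) = 0 :=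
    if_pos (adjoint_apply_inv_smul_adjoint_sub_self hA hα p)
  refine (iInf_le _ p).trans_eq ?_
  rw [hpa, hind, add_zero, EReal.coe_add]

lemma inv_mul_fiberEnvelope_add_le (hA : ∀ u, (A†) (A u) = α • u) (hα : 0 < α) {a : ℝ}
    (hpa : h p = a) (x : E) :
    ((α⁻¹ : ℝ) : EReal) * fiberEnvelope A h (α⁻¹ • (A†) p) +
        ((1 / 2 * ‖α⁻¹ • (A†) p - x‖ ^ 2 : ℝ) : EReal) ≤
      ((α⁻¹ * (a + 1 / 2 * ‖p - A x‖ ^ 2) : ℝ) : EReal) := by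
  have hle := mul_le_mul_of_nonneg_left (fiberEnvelope_le hA hα.ne' hpa)
    (by exact_mod_cast (inv_pos.2 hα).le : (0 : EReal) ≤ ((α⁻¹ : ℝ) : EReal))
  rw [← EReal.coe_mul] at hle
  refine (add_le_add hle le_rfl).trans_eq ?_
  rw [← EReal.coe_add, norm_sub_apply_sq_of_adjoint_eq_zero hA
    (adjoint_apply_inv_smul_adjoint_sub_self hA hα.ne' p) x]
  congr 1
  field_simp
  ring

end Envelope

theorem statement6 (n m : ℕ)
    (g : EuclideanSpace ℝ (Fin m) → EReal) (hg : ProperConvexLSC g)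
    (A : EuclideanSpace ℝ (Fin n) →L[ℝ] EuclideanSpace ℝ (Fin m))
    (α : ℝ) (hα : 0 < α)
    (hA : (ContinuousLinearMap.adjoint A).comp A =
      α • ContinuousLinearMap.id ℝ (EuclideanSpace ℝ (Fin n)))
    (P : EuclideanSpace ℝ (Fin m) → EuclideanSpace ℝ (Fin m))
    (hP : ∀ x, IsProxPt (fun z => (α : EReal) * g z) x (P x))
    (φ : EuclideanSpace ℝ (Fin n) → EReal)
    (hφ : ∀ x, φ x = ((α⁻¹ : ℝ) : EReal) *
      ⨅ y : EuclideanSpace ℝ (Fin m),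
        ((α : EReal) * g y + (((1 : ℝ) / 2 * ‖A x - y‖ ^ 2 : ℝ) : EReal) +
          eindicator {v | (ContinuousLinearMap.adjoint A) v = 0} (A x - y))) :
    ∀ (x q : EuclideanSpace ℝ (Fin n)),
      IsProxPt φ x q ↔ q = α⁻¹ • (ContinuousLinearMap.adjoint A) (P (A x)) := by
  intro x q
  have hA' : ∀ u, (A†) (A u) = α • u := fun u => by simpa using congrArg (fun T => T u) hA
  obtain ⟨⟨z₀, hz₀⟩, hg_bot, -, hg_conv⟩ := hg
  have hp := hP (A x)
  obtain ⟨b₀, hb₀⟩ : ∃ b : ℝ, g z₀ = b := ⟨_, (EReal.coe_toReal hz₀ (hg_bot z₀)).symm⟩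
  have hgp_top : g (P (A x)) ≠ ⊤ := fun htop => hp.ne_top (u := z₀)
    (by simp [hb₀, ← EReal.coe_mul]) (by simp [htop, EReal.coe_mul_top_of_pos hα])
  obtain ⟨b, hb⟩ : ∃ b : ℝ, g (P (A x)) = b := ⟨_, (EReal.coe_toReal hgp_top (hg_bot _)).symm⟩
  have hpa : (α : EReal) * g (P (A x)) = ((α * b : ℝ) : EReal) := by rw [hb, EReal.coe_mul]
  have hH := hp.add_quarter_norm_sq_le (ERealConvex.const_mul (h := g) hg_conv hα.le) hpa
  obtain rfl : φ = fun u => ((α⁻¹ : ℝ) : EReal) * fiberEnvelope A (fun z => (α : EReal) * g z) u :=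
    funext hφ
  exact forall_le_iff_eq_of_quadratic_growth (by norm_num : (0 : ℝ) < 1 / 4)
    (Φ := fun u => ((α⁻¹ : ℝ) : EReal) * fiberEnvelope A (fun z => (α : EReal) * g z) u +
      ((1 / 2 * ‖u - x‖ ^ 2 : ℝ) : EReal))
    (inv_mul_fiberEnvelope_add_le hA' hα hpa x) (le_inv_mul_fiberEnvelope_add hA' hα hH) q
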